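/- If, for every m ≤ n and every α with θ_m < α ≤ θ_{m+1}, there exists β with θ_{m-1} < β ≤ θ_m and β <_T α, then for every α with θ_n < α ≤ θ_{n+1} the backward sequence of α relative to p_1,…,p_{n+1} has length exactly n+1 (i.e., m_i = i for all i). -/
import Mathlib


/-- `BackSeq T θ N α l` : `l` is the backward sequence of `α` relative to `p_1, …, p_N`,
where `θ i` is the height (minus one) of `p_i` and `T` is the tree ordering `<_T`. -/
inductive BackSeq (T : Ordinal → Ordinal → Prop) (θ : ℕ → Ordinal) :
    ℕ → Ordinal → List (Ordinal × ℕ) → Prop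
  | base (α : Ordinal) : BackSeq T θ 1 α [(α, 1)]
  | step {N : ℕ} (hN : 1 < N) {α β : Ordinal} {m : ℕ} {l : List (Ordinal × ℕ)}
      (hβT : T β α) (h1m : 1 ≤ m) (hmN : m < N) (hβθ : β ≤ θ m)
      (hmax : ∀ γ, T γ α → (∃ m', 1 ≤ m' ∧ m' < N ∧ γ ≤ θ m') → γ ≤ β)
      (hminm : ∀ m', 1 ≤ m' → m' < N → β ≤ θ m' → m ≤ m')
      (hl : BackSeq T θ m β l) :
      BackSeq T θ N α (l ++ [(α, N)])

theorem backSeq_aux {T : Ordinal → Ordinal → Prop} {θ : ℕ → Ordinal} {n : ℕ}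
    (hθ : ∀ i j, 1 ≤ i → i < j → j ≤ n + 1 → θ i < θ j)
    (hpred : ∀ m ≤ n, ∀ α : Ordinal, θ m < α → α ≤ θ (m + 1) →
      ∃ β : Ordinal, (m = 0 ∨ θ (m - 1) < β) ∧ β ≤ θ m ∧ T β α) :
    ∀ {N : ℕ} {α : Ordinal} {l : List (Ordinal × ℕ)}, BackSeq T θ N α l →
      N ≤ n + 1 → θ (N - 1) < α → α ≤ θ N →
      l.length = N ∧ ∀ (i : ℕ) (h : i < l.length), (l.get ⟨i, h⟩).2 = i + 1 := by
  intro N α l hbs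
  induction hbs with
  | base α =>
    intro _ _ _
    refine ⟨rfl, ?_⟩
    intro i h
    simp only [List.length_singleton] at h
    interval_cases i
    rfl
  | step hN hβT h1m hmN hβθ hmax hminm hl ih =>
    rename_i N α β m l
    intro hNn hθα hαθ
    -- get predecessor from hpred at level N-1
    obtain ⟨β₀, hβ₀lo, hβ₀hi, hβ₀T⟩ := hpred (N - 1) (by omega) α
      (by rwa [show N - 1 = N - 1 from rfl]) (by rwa [show N - 1 + 1 = N by omega])
    have hβ₀lo' : θ (N - 2) < β₀ := by
      rcases hβ₀lo with h | h
      · omega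
      · rwa [show N - 1 - 1 = N - 2 by omega] at h
    have hβ₀β : β₀ ≤ β := hmax β₀ hβ₀T ⟨N - 1, by omega, by omega, hβ₀hi⟩
    -- θ m ≤ θ (N-1)
    have hmono : ∀ i j, 1 ≤ i → i ≤ j → j ≤ n + 1 → θ i ≤ θ j := by
      intro i j hi hij hj
      rcases eq_or_lt_of_le hij with h | h
      · rw [h]
      · exact (hθ i j hi h hj).le
    have hβN1 : β ≤ θ (N - 1) :=
      hβθ.trans (hmono m (N - 1) h1m (by omega) (by omega))
    have hmN1 : m ≤ N - 1 := hminm (N - 1) (by omega) (by omega) hβN1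
    have hm : m = N - 1 := by
      by_contra hne
      have hmlt : m ≤ N - 2 := by omega
      have : θ m ≤ θ (N - 2) := hmono m (N - 2) h1m hmlt (by omega)
      exact absurd (hβ₀β.trans hβθ) (not_le.mpr (lt_of_le_of_lt this hβ₀lo'))
    have hθβ : θ (m - 1) < β := by
      rw [show m - 1 = N - 2 by omega]
      exact lt_of_lt_of_le hβ₀lo' hβ₀β
    obtain ⟨hlen, hget⟩ := ih (by omega) hθβ hβθ
    constructor
    · simp [hlen]; omega
    · intro i h
      simp only [List.length_append, List.length_singleton, hlen] at h
      rcases lt_or_ge i l.length with hi | hi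
      · have : (l ++ [(α, N)]).get ⟨i, by simp; omega⟩ = l.get ⟨i, hi⟩ := by
          simp [List.getElem_append_left hi]
        rw [this]
        exact hget i hi
      · have : (l ++ [(α, N)]).get ⟨i, by simp; omega⟩ = (α, N) := by
          rw [List.get_eq_getElem]
          rw [List.getElem_append_right (i := i) hi]
          simp
        rw [this]
        show N = i + 1
        omega

/-- If every step from block `m` to block `m+1` has a `<_T`-predecessor in the immediately
preceding block, then every backward sequence relative to `p_1,…,p_{n+1}` has full length
`n+1`, i.e. `m_i = i` for all `i`. -/
theorem backSeq_full_length {T : Ordinal → Ordinal → Prop} {θ : ℕ → Ordinal} {n : ℕ}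
    -- `<_T` is a tree ordering on the ordinals `≤ θ (n+1)`, rooted at `0`:
    (hsub : ∀ β γ, T β γ → β < γ)
    (htrans : ∀ a b c, T a b → T b c → T a c)
    (hwf : WellFounded T)
    (hlin : ∀ a b c, T a c → T b c → T a b ∨ a = b ∨ T b a)
    (hfin : ∀ a, {b | T b a}.Finite)
    (hroot : ∀ a, 0 < a → a ≤ θ (n + 1) → T 0 a)
    -- the blocks `{β : β ≤ θ i}` are `<_T`-downward closed:
    (hdc : ∀ i, 1 ≤ i → i ≤ n + 1 → ∀ β γ, T β γ → γ ≤ θ i → β ≤ θ i)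
    -- the heights are strictly increasing and `θ 0 = 0`:
    (hθ0 : θ 0 = 0)
    (hθ : ∀ i j, 1 ≤ i → i < j → j ≤ n + 1 → θ i < θ j)
    (hpred : ∀ m ≤ n, ∀ α : Ordinal, θ m < α → α ≤ θ (m + 1) →
      ∃ β : Ordinal, (m = 0 ∨ θ (m - 1) < β) ∧ β ≤ θ m ∧ T β α)
    : ∀ α : Ordinal, θ n < α → α ≤ θ (n + 1) →
      ∀ l : List (Ordinal × ℕ), BackSeq T θ (n + 1) α l →
        l.length = n + 1 ∧ ∀ (i : ℕ) (h : i < l.length), (l.get ⟨i, h⟩).2 = i + 1 := by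
  intro α h1 h2 l hl
  exact backSeq_aux hθ hpred hl le_rfl (by simpa using h1) h2
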